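/- Suppose there exist M ≥ 0, α < 0, and q > 2 such that F(k,u) ≤ α|u|^q for all k ∈ Z[1,N] and |u| > M (p arbitrary). Then J is coercive on E and the boundary value problem has at least one solution. -/

import Mathlib

/-!
Outside `[-M, M]` the potential satisfies `-F(k,u) ≥ -α|u|^q`, and by continuity it is off from this
by at most a constant inside. Since `|Δⁿx(k)| ≤ 2ⁿ‖x‖` and some coordinate has `|x(k)| ≥ ‖x‖/√N`,
this gives `J(x) ≥ c‖x‖^q - C‖x‖² - K` with `c > 0`, hence coercivity because `q > 2`. A coercive
continuous function on the finite-dimensional space `E` attains its minimum; at a minimizer the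
derivative of `J` in each coordinate direction vanishes, and summation by parts turns this
derivative into the left-hand side of the equation.
-/

open Finset

/-- forward difference operator -/
def dd (x : ℤ → ℝ) : ℤ → ℝ := fun i => x (i + 1) - x i

/-- extension of `v : Fin N → ℝ` to a function on `ℤ` supported on `Z[1,N]`
(thus vanishing on `Z[1-n,0] ∪ Z[N+1,N+n]`); this realizes the space `E`. -/
noncomputable def extendE (N : ℕ) (v : Fin N → ℝ) : ℤ → ℝ := fun i =>
  if h : 0 ≤ i - 1 ∧ (i - 1).toNat < N then v ⟨(i - 1).toNat, h.2⟩ else 0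

/-- the norm of the space `E`: `‖x‖ = (∑_{k=1}^N x(k)²)^{1/2}` -/
noncomputable def normE (N : ℕ) (v : Fin N → ℝ) : ℝ :=
  Real.sqrt (∑ k ∈ Finset.Icc (1 : ℤ) (N : ℤ), (extendE N v k) ^ 2)

/-- `F(k,s) = ∫₀ˢ f(k,t) dt` -/
noncomputable def Ffun (f : ℤ → ℝ → ℝ) (k : ℤ) (s : ℝ) : ℝ := ∫ t in (0 : ℝ)..s, f k t

/-- the action functional `J` -/
noncomputable def Jfun (n N : ℕ) (p : ℤ → ℝ) (F : ℤ → ℝ → ℝ) (v : Fin N → ℝ) : ℝ :=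
  ∑ k ∈ Finset.Icc (1 - (n : ℤ)) (N : ℤ),
    ((1 / 2 : ℝ) * p k * (dd^[n] (extendE N v) k) ^ 2 - F k (extendE N v k))

/-- `v` solves the discrete BVP
`Δⁿ(p(k-n)Δⁿx(k-n)) + (-1)^{n+1} f(k,x(k)) = 0`, `k ∈ Z[1,N]`,
with the Dirichlet boundary conditions built into `extendE`. -/
def Solves (n N : ℕ) (p : ℤ → ℝ) (f : ℤ → ℝ → ℝ) (v : Fin N → ℝ) : Prop :=
  ∀ k ∈ Finset.Icc (1 : ℤ) (N : ℤ),
    dd^[n] (fun j => p j * dd^[n] (extendE N v) j) (k - n)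
      + (-1 : ℝ) ^ (n + 1) * f k (extendE N v k) = 0

/-- coercivity: `J(x) → +∞` as `‖x‖ → ∞` -/
def CoerciveE (N : ℕ) (J : (Fin N → ℝ) → ℝ) : Prop :=
  ∀ C : ℝ, ∃ R : ℝ, ∀ v : Fin N → ℝ, R ≤ normE N v → C ≤ J v

/-- anti-coercivity: `J(x) → −∞` as `‖x‖ → ∞` -/
def AntiCoerciveE (N : ℕ) (J : (Fin N → ℝ) → ℝ) : Prop :=
  ∀ C : ℝ, ∃ R : ℝ, ∀ v : Fin N → ℝ, R ≤ normE N v → J v ≤ C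

open Filter

lemma dd_iter_add_mul (x y : ℤ → ℝ) (t : ℝ) (n : ℕ) (k : ℤ) :
    dd^[n] (fun j => x j + t * y j) k = dd^[n] x k + t * dd^[n] y k := by
  induction n generalizing k with
  | zero => rfl
  | succ n ih =>
    simp only [Function.iterate_succ_apply', dd, ih]
    ring

lemma abs_dd_iter_le {x : ℤ → ℝ} {c : ℝ} (hx : ∀ j, |x j| ≤ c) (n : ℕ) (k : ℤ) :
    |dd^[n] x k| ≤ 2 ^ n * c := by
  induction n generalizing k with
  | zero => simpa using hx k
  | succ n ih =>
    rw [Function.iterate_succ_apply', dd, pow_succ]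
    linarith [abs_sub (dd^[n] x (k + 1)) (dd^[n] x k), ih (k + 1), ih k]

lemma continuous_dd_iter {X : Type*} [TopologicalSpace X] {x : X → ℤ → ℝ}
    (hx : ∀ j, Continuous fun a => x a j) (n : ℕ) (k : ℤ) :
    Continuous fun a => dd^[n] (x a) k := by
  induction n generalizing k with
  | zero => exact hx k
  | succ n ih =>
    simp only [Function.iterate_succ_apply', dd]
    exact (ih (k + 1)).sub (ih k)

lemma sum_mul_dd_eq_neg {a b : ℤ} (g h : ℤ → ℝ) (hh : ∀ k ∉ Icc a b, h k = 0) :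
    ∑ k ∈ Icc (a - 1) b, g k * dd h k = -∑ k ∈ Icc a b, dd g (k - 1) * h k := by
  have h_restrict : ∀ (φ : ℤ → ℝ) {s : Finset ℤ}, Icc a b ⊆ s →
      ∑ k ∈ s, φ k * h k = ∑ k ∈ Icc a b, φ k * h k := fun φ s hs =>
    (sum_subset hs fun k _ hk => by rw [hh k hk, mul_zero]).symm
  have h_shift : ∑ k ∈ Icc (a - 1) b, g k * h (k + 1) = ∑ k ∈ Icc a (b + 1), g (k - 1) * h k := by
    have := sum_map (Icc (a - 1) b) (addRightEmbedding 1) fun k => g (k - 1) * h k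
    rw [map_add_right_Icc, sub_add_cancel] at this
    simpa using this.symm
  calc ∑ k ∈ Icc (a - 1) b, g k * dd h k
      = ∑ k ∈ Icc a (b + 1), g (k - 1) * h k - ∑ k ∈ Icc (a - 1) b, g k * h k := by
        simp only [dd, mul_sub, sum_sub_distrib, h_shift]
    _ = ∑ k ∈ Icc a b, g (k - 1) * h k - ∑ k ∈ Icc a b, g k * h k := by
        rw [h_restrict _ (s := Icc a (b + 1)) (Icc_subset_Icc le_rfl (by omega)),
          h_restrict _ (s := Icc (a - 1) b) (Icc_subset_Icc (by omega) le_rfl)]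
    _ = -∑ k ∈ Icc a b, dd g (k - 1) * h k := by
        simp only [dd, sub_add_cancel, sub_mul, sum_sub_distrib]
        ring

lemma sum_mul_dd_iter_eq {a b : ℤ} (n : ℕ) (g h : ℤ → ℝ) (hh : ∀ k ∉ Icc a b, h k = 0) :
    ∑ k ∈ Icc (a - n) b, g k * dd^[n] h k
      = (-1) ^ n * ∑ k ∈ Icc a b, dd^[n] g (k - n) * h k := by
  induction n generalizing a h with
  | zero => simp
  | succ n ih =>
    have hdd : ∀ k ∉ Icc (a - 1) b, dd h k = 0 := fun k hk => by
      rw [mem_Icc] at hk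
      rw [dd, hh _ (by rw [mem_Icc]; omega), hh _ (by rw [mem_Icc]; omega), sub_zero]
    have hdd_iter : ∀ k, dd (fun j => dd^[n] g (j - n)) (k - 1) = dd^[n + 1] g (k - (n + 1 : ℕ)) := by
      intro k
      simp only [Function.iterate_succ_apply', dd]
      push_cast
      ring_nf
    calc ∑ k ∈ Icc (a - (n + 1 : ℕ)) b, g k * dd^[n + 1] h k
        = ∑ k ∈ Icc (a - 1 - n) b, g k * dd^[n] (dd h) k := by
          rw [Nat.cast_succ, sub_add_eq_sub_sub_swap]; rfl
      _ = (-1) ^ n * ∑ k ∈ Icc (a - 1) b, dd^[n] g (k - n) * dd h k := ih (dd h) hdd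
      _ = (-1) ^ (n + 1) * ∑ k ∈ Icc a b, dd^[n + 1] g (k - (n + 1 : ℕ)) * h k := by
          rw [sum_mul_dd_eq_neg _ h hh, pow_succ]
          simp only [hdd_iter]
          ring

section ExtendE

variable {N : ℕ}

lemma extendE_eq_zero (v : Fin N → ℝ) {k : ℤ} (hk : k ∉ Icc (1 : ℤ) N) : extendE N v k = 0 := by
  rw [mem_Icc] at hk
  exact dif_neg fun ⟨h₁, h₂⟩ => hk ⟨by omega, by omega⟩

lemma extendE_apply (v : Fin N → ℝ) (i : Fin N) : extendE N v ((i : ℤ) + 1) = v i := by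
  rw [extendE, dif_pos ⟨by omega, by omega⟩]
  congr
  omega

lemma extendE_add_smul (v w : Fin N → ℝ) (t : ℝ) (k : ℤ) :
    extendE N (v + t • w) k = extendE N v k + t * extendE N w k := by
  unfold extendE
  split <;> simp

lemma extendE_single (i : Fin N) (k : ℤ) :
    extendE N (Pi.single i 1) k = if k = (i : ℤ) + 1 then 1 else 0 := by
  split_ifs with hk
  · rw [hk, extendE_apply, Pi.single_eq_same]
  · unfold extendE
    split
    · refine Pi.single_eq_of_ne (fun h => hk ?_) _
      have := congrArg Fin.val h
      simp only at this
      omega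
    · rfl

lemma continuous_extendE (k : ℤ) : Continuous fun v : Fin N → ℝ => extendE N v k := by
  unfold extendE
  split
  · exact continuous_apply _
  · exact continuous_const

lemma sq_normE (v : Fin N → ℝ) : normE N v ^ 2 = ∑ k ∈ Icc (1 : ℤ) N, extendE N v k ^ 2 :=
  Real.sq_sqrt (sum_nonneg fun _ _ => sq_nonneg _)

lemma normE_nonneg (v : Fin N → ℝ) : 0 ≤ normE N v := Real.sqrt_nonneg _

lemma abs_extendE_le_normE (v : Fin N → ℝ) (k : ℤ) : |extendE N v k| ≤ normE N v := by
  by_cases hk : k ∈ Icc (1 : ℤ) N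
  · exact Real.abs_le_sqrt (single_le_sum (f := fun k => extendE N v k ^ 2)
      (fun _ _ => sq_nonneg _) hk)
  · rw [extendE_eq_zero v hk, abs_zero]
    exact normE_nonneg v

lemma norm_le_normE (v : Fin N → ℝ) : ‖v‖ ≤ normE N v :=
  (pi_norm_le_iff_of_nonneg (normE_nonneg v)).2 fun i => by
    simpa only [Real.norm_eq_abs, extendE_apply] using abs_extendE_le_normE v (i + 1)

lemma exists_normE_div_sqrt_le_abs_extendE (hN : 0 < N) (v : Fin N → ℝ) :
    ∃ k ∈ Icc (1 : ℤ) N, normE N v / √N ≤ |extendE N v k| := by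
  obtain ⟨k, hk, hle⟩ : ∃ k ∈ Icc (1 : ℤ) N, normE N v ^ 2 / N ≤ extendE N v k ^ 2 := by
    refine exists_le_of_sum_le ⟨1, by rw [mem_Icc]; omega⟩ ?_
    rw [sum_const, Int.card_Icc, add_sub_cancel_right, Int.toNat_natCast, nsmul_eq_mul,
      mul_div_cancel₀ _ (by positivity), sq_normE]
  refine ⟨k, hk, ?_⟩
  rw [← Real.sqrt_sq (normE_nonneg v), ← Real.sqrt_div' _ (Nat.cast_nonneg N),
    ← Real.sqrt_sq_eq_abs]
  exact Real.sqrt_le_sqrt hle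

end ExtendE

section Potential

variable {f : ℤ → ℝ → ℝ}

lemma hasDerivAt_Ffun (hf : ∀ k, Continuous (f k)) (k : ℤ) (s : ℝ) :
    HasDerivAt (Ffun f k) (f k s) s :=
  ((hf k).integral_hasStrictDerivAt 0 s).hasDerivAt

lemma continuous_Ffun (hf : ∀ k, Continuous (f k)) (k : ℤ) : Continuous (Ffun f k) :=
  continuous_iff_continuousAt.2 fun s => (hasDerivAt_Ffun hf k s).continuousAt

lemma Ffun_zero (k : ℤ) : Ffun f k 0 = 0 := intervalIntegral.integral_same

end Potential

lemma exists_le_add_const_of_le_of_lt_abs {F G : ℝ → ℝ} (hF : Continuous F) (hG : Continuous G)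
    {M : ℝ} (h : ∀ u, M < |u| → F u ≤ G u) : ∃ D, ∀ u, F u ≤ G u + D := by
  obtain ⟨C, hC⟩ :=
    (isCompact_Icc (a := -M) (b := M)).exists_bound_of_continuousOn (hF.sub hG).continuousOn
  refine ⟨max C 0, fun u => ?_⟩
  by_cases hu : M < |u|
  · linarith [h u hu, le_max_right C 0]
  · have := hC u (Set.mem_Icc.2 (abs_le.1 (not_lt.1 hu)))
    rw [Real.norm_eq_abs, Pi.sub_apply] at this
    linarith [le_abs_self (F u - G u), le_max_left C 0]

lemma tendsto_mul_rpow_sub_mul_sq_sub {a q : ℝ} (ha : 0 < a) (hq : 2 < q) (b c : ℝ) :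
    Tendsto (fun r : ℝ => a * r ^ q - b * r ^ 2 - c) atTop atTop := by
  have h : Tendsto (fun r : ℝ => (a * r ^ (q - 2) + -b) * r ^ 2) atTop atTop :=
    (tendsto_atTop_add_const_right _ _ ((tendsto_rpow_atTop (by linarith)).const_mul_atTop ha)
      ).atTop_mul_atTop₀ (tendsto_pow_atTop two_ne_zero)
  refine tendsto_atTop_add_const_right _ (-c) (h.congr' ?_)
  filter_upwards [eventually_gt_atTop 0] with r hr
  rw [show r ^ q = r ^ (q - 2) * r ^ 2 by
    rw [← Real.rpow_natCast, ← Real.rpow_add hr]; norm_num]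
  ring

lemma coerciveE_of_le {N : ℕ} {J : (Fin N → ℝ) → ℝ} {g : ℝ → ℝ} (hg : Tendsto g atTop atTop)
    (hJ : ∀ v, g (normE N v) ≤ J v) : CoerciveE N J := fun C =>
  let ⟨R, hR⟩ := eventually_atTop.1 (hg.eventually_ge_atTop C)
  ⟨R, fun v hv => (hR _ hv).trans (hJ v)⟩

lemma CoerciveE.tendsto_cocompact {N : ℕ} {J : (Fin N → ℝ) → ℝ} (hJ : CoerciveE N J) :
    Tendsto J (cocompact _) atTop := by
  have hnorm : Tendsto (normE N) (cocompact _) atTop :=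
    tendsto_atTop_mono norm_le_normE tendsto_norm_cocompact_atTop
  refine tendsto_atTop.2 fun C => ?_
  obtain ⟨R, hR⟩ := hJ C
  exact (tendsto_atTop.1 hnorm R).mono hR

section Functional

variable {n N : ℕ} {p : ℤ → ℝ} {f : ℤ → ℝ → ℝ}

lemma Jfun_eq_sub_sum_Icc {F : ℤ → ℝ → ℝ} (hF : ∀ k, F k 0 = 0) (v : Fin N → ℝ) :
    Jfun n N p F v = ∑ k ∈ Icc (1 - (n : ℤ)) N, 1 / 2 * p k * dd^[n] (extendE N v) k ^ 2
      - ∑ k ∈ Icc (1 : ℤ) N, F k (extendE N v k) := by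
  rw [Jfun, sum_sub_distrib, ← sum_subset (Icc_subset_Icc (by omega : 1 - (n : ℤ) ≤ 1) le_rfl)
    (f := fun k => F k (extendE N v k)) fun k _ hk => by rw [extendE_eq_zero v hk, hF]]

lemma neg_mul_sq_normE_le_sum (v : Fin N → ℝ) :
    -(∑ k ∈ Icc (1 - (n : ℤ)) N, |p k| / 2 * 4 ^ n) * normE N v ^ 2
      ≤ ∑ k ∈ Icc (1 - (n : ℤ)) N, 1 / 2 * p k * dd^[n] (extendE N v) k ^ 2 := by
  rw [neg_mul, sum_mul, ← sum_neg_distrib]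
  refine sum_le_sum fun k _ => ?_
  have hsq : dd^[n] (extendE N v) k ^ 2 ≤ 4 ^ n * normE N v ^ 2 := by
    rw [show (4 : ℝ) ^ n * normE N v ^ 2 = (2 ^ n * normE N v) ^ 2 by
      rw [mul_pow, ← pow_mul, mul_comm n 2, pow_mul]; norm_num, ← sq_abs]
    exact pow_le_pow_left₀ (abs_nonneg _) (abs_dd_iter_le (abs_extendE_le_normE v) n k) 2
  nlinarith [neg_abs_le (p k), abs_nonneg (p k), sq_nonneg (dd^[n] (extendE N v) k)]

lemma rpow_normE_div_sqrt_le_sum (hN : 0 < N) {q : ℝ} (hq : 0 ≤ q) (v : Fin N → ℝ) :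
    (normE N v / √N) ^ q ≤ ∑ k ∈ Icc (1 : ℤ) N, |extendE N v k| ^ q := by
  obtain ⟨k, hk, hle⟩ := exists_normE_div_sqrt_le_abs_extendE hN v
  calc (normE N v / √N) ^ q ≤ |extendE N v k| ^ q :=
        Real.rpow_le_rpow (by positivity [normE_nonneg v]) hle hq
    _ ≤ _ := single_le_sum (f := fun k => |extendE N v k| ^ q)
        (fun _ _ => by positivity) hk

lemma coerciveE_Jfun (hN : 0 < N) (hf : ∀ k, Continuous (f k)) {M α q : ℝ} (hα : α < 0)
    (hq : 2 < q) (hFle : ∀ k ∈ Icc (1 : ℤ) N, ∀ u : ℝ, M < |u| → Ffun f k u ≤ α * |u| ^ q) :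
    CoerciveE N (Jfun n N p (Ffun f)) := by
  have hG : Continuous fun u : ℝ => α * |u| ^ q :=
    continuous_const.mul (continuous_abs.rpow_const fun _ => Or.inr (by linarith))
  choose! D hD using fun k hk =>
    exists_le_add_const_of_le_of_lt_abs (continuous_Ffun hf k) hG (hFle k hk)
  set P := ∑ k ∈ Icc (1 - (n : ℤ)) N, |p k| / 2 * 4 ^ n
  set K := ∑ k ∈ Icc (1 : ℤ) N, D k
  have hsN : 0 < √(N : ℝ) := Real.sqrt_pos.2 (by exact_mod_cast hN)
  refine coerciveE_of_le (tendsto_mul_rpow_sub_mul_sq_sub (a := -α / √N ^ q)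
    (div_pos (neg_pos.2 hα) (by positivity)) hq P K) fun v => ?_
  set r := normE N v
  set x := extendE N v
  have hpot : ∑ k ∈ Icc (1 : ℤ) N, Ffun f k (x k) ≤ α * ∑ k ∈ Icc (1 : ℤ) N, |x k| ^ q + K := by
    rw [mul_sum, ← sum_add_distrib]
    exact sum_le_sum fun k hk => hD k hk (x k)
  calc -α / √N ^ q * r ^ q - P * r ^ 2 - K
      = -α * (r / √N) ^ q - P * r ^ 2 - K := by
        rw [Real.div_rpow (normE_nonneg v) hsN.le]; ring
    _ ≤ -α * ∑ k ∈ Icc (1 : ℤ) N, |x k| ^ q - P * r ^ 2 - K := by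
        gcongr
        · linarith
        · exact rpow_normE_div_sqrt_le_sum hN (by linarith) v
    _ ≤ Jfun n N p (Ffun f) v := by
        rw [Jfun_eq_sub_sum_Icc Ffun_zero]
        linarith [neg_mul_sq_normE_le_sum (n := n) (p := p) v]

lemma continuous_Jfun (hf : ∀ k, Continuous (f k)) : Continuous (Jfun n N p (Ffun f)) :=
  continuous_finsetSum _ fun k _ =>
    (continuous_const.mul ((continuous_dd_iter continuous_extendE n k).pow 2)).sub
      ((continuous_Ffun hf k).comp (continuous_extendE k))

lemma hasDerivAt_Jfun_add_smul (hf : ∀ k, Continuous (f k)) (v w : Fin N → ℝ) :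
    HasDerivAt (fun t : ℝ => Jfun n N p (Ffun f) (v + t • w))
      (∑ k ∈ Icc (1 : ℤ) N, ((-1) ^ n * dd^[n] (fun j => p j * dd^[n] (extendE N v) j) (k - n)
        - f k (extendE N v k)) * extendE N w k) 0 := by
  set x := extendE N v
  set y := extendE N w
  have hline : ∀ t : ℝ, extendE N (v + t • w) = fun j => x j + t * y j := fun t =>
    funext (extendE_add_smul v w t)
  simp only [Jfun, hline, dd_iter_add_mul]
  have hderiv : HasDerivAt (fun t : ℝ => ∑ k ∈ Icc (1 - (n : ℤ)) N,
      (1 / 2 * p k * (dd^[n] x k + t * dd^[n] y k) ^ 2 - Ffun f k (x k + t * y k)))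
      (∑ k ∈ Icc (1 - (n : ℤ)) N, (p k * dd^[n] x k * dd^[n] y k - f k (x k) * y k)) 0 := by
    refine HasDerivAt.fun_sum fun k _ => ?_
    have hquad := (((hasDerivAt_mul_const (x := 0) (dd^[n] y k)).const_add (dd^[n] x k)).pow 2).const_mul
      (1 / 2 * p k)
    have hpot := (hasDerivAt_Ffun hf k (x k + 0 * y k)).comp (0 : ℝ)
      ((hasDerivAt_mul_const (y k)).const_add (x k))
    exact (hquad.sub hpot).congr_deriv (by simp only [zero_mul, add_zero]; ring)
  refine hderiv.congr_deriv ?_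
  rw [sum_sub_distrib, sum_mul_dd_iter_eq n (fun j => p j * dd^[n] x j) y
    fun k hk => extendE_eq_zero w hk, ← sum_subset (Icc_subset_Icc (by omega : 1 - (n : ℤ) ≤ 1)
    le_rfl) (f := fun k => f k (x k) * y k) fun k _ hk => by rw [show y k = 0 from extendE_eq_zero w hk, mul_zero],
    mul_sum, ← sum_sub_distrib]
  simp only [sub_mul, mul_assoc]

lemma solves_of_forall_le (hf : ∀ k, Continuous (f k)) {v : Fin N → ℝ}
    (hmin : ∀ w, Jfun n N p (Ffun f) v ≤ Jfun n N p (Ffun f) w) : Solves n N p f v := by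
  intro k hk
  rw [mem_Icc] at hk
  obtain ⟨i, rfl⟩ : ∃ i : Fin N, (i : ℤ) + 1 = k := ⟨⟨(k - 1).toNat, by omega⟩, by simp; omega⟩
  have hlocal : IsLocalMin (fun t : ℝ => Jfun n N p (Ffun f) (v + t • Pi.single i 1)) 0 :=
    Eventually.of_forall fun t => by simpa using hmin _
  have hcrit := hlocal.hasDerivAt_eq_zero (hasDerivAt_Jfun_add_smul hf v (Pi.single i 1))
  simp only [extendE_single, mul_ite, mul_one, mul_zero, sum_ite_eq', mem_Icc] at hcrit
  rw [if_pos ⟨by omega, by omega⟩] at hcrit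
  have hsign : ((-1 : ℝ) ^ n) ^ 2 = 1 := by rw [← pow_mul, mul_comm, pow_mul]; norm_num
  linear_combination (-1) ^ n * hcrit - dd^[n] (fun j => p j * dd^[n] (extendE N v) j)
    ((i : ℤ) + 1 - n) * hsign

end Functional

theorem stmt12_general (n N : ℕ) (hN : 2 ≤ N) (p : ℤ → ℝ)
    (f : ℤ → ℝ → ℝ) (hf : ∀ k, Continuous (f k))
    (M α q : ℝ) (hα : α < 0) (hq : 2 < q)
    (hFle : ∀ k ∈ Finset.Icc (1 : ℤ) (N : ℤ), ∀ u : ℝ, M < |u| →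
      Ffun f k u ≤ α * |u| ^ q) :
    CoerciveE N (Jfun n N p (Ffun f)) ∧ ∃ v : Fin N → ℝ, Solves n N p f v := by
  have hJ : CoerciveE N (Jfun n N p (Ffun f)) := coerciveE_Jfun (by omega) hf hα hq hFle
  obtain ⟨v, hv⟩ := (continuous_Jfun hf).exists_forall_le hJ.tendsto_cocompact
  exact ⟨hJ, v, solves_of_forall_le hf hv⟩

theorem stmt12 (n N : ℕ) (hn : 1 ≤ n) (hN : 2 ≤ N) (p : ℤ → ℝ)
    (f : ℤ → ℝ → ℝ) (hf : ∀ k, Continuous (f k))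
    (M α q : ℝ) (hM : 0 ≤ M) (hα : α < 0) (hq : 2 < q)
    (hFle : ∀ k ∈ Finset.Icc (1 : ℤ) (N : ℤ), ∀ u : ℝ, M < |u| →
      Ffun f k u ≤ α * |u| ^ q) :
    CoerciveE N (Jfun n N p (Ffun f)) ∧ ∃ v : Fin N → ℝ, Solves n N p f v :=
  stmt12_general n N hN p f hf M α q hα hq hFle
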